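/- Let R be a (possibly noncommutative) ring, let p ∈ R be an idempotent (p·p = p), and let u, v ∈ R commute (u·v = v·u). Then p·[[u,p],[v,p]] = [p·u·p, p·v·p], where [a,b] := a·b − b·a denotes the ring commutator. -/

import Mathlib

/-!
Expanding with `p * p = p` gives `p * (u * p - p * u) * (v * p - p * v) = p*u*p*v*p - p*u*v*p`, and
`p*u*p*v*p = (p*u*p) * (p*v*p)`. Subtracting the same expansion with `u` and `v` swapped, the
terms `p*u*v*p` and `p*v*u*p` cancel because `u` and `v` commute.
-/

namespace IsIdempotentElem

variable {R : Type*} [NonUnitalRing R] {p : R}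

theorem compress_mul_compress (hp : IsIdempotentElem p) (a b : R) :
    p * a * p * (p * b * p) = p * a * p * b * p := by
  simp only [← mul_assoc, hp.mul_mul_self]

theorem mul_commutator_mul_commutator (hp : IsIdempotentElem p) (u v : R) :
    p * ((u * p - p * u) * (v * p - p * v)) = p * u * p * v * p - p * u * v * p := by
  simp only [mul_sub, sub_mul, ← mul_assoc, hp.eq, hp.mul_mul_self]
  abel

end IsIdempotentElem

theorem projection_double_commutator {R : Type*} [Ring R] (p u v : R)
    (hp : p * p = p) (huv : u * v = v * u) :
    p * ((u * p - p * u) * (v * p - p * v) - (v * p - p * v) * (u * p - p * u)) =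
      (p * u * p) * (p * v * p) - (p * v * p) * (p * u * p) := by
  rw [mul_sub, IsIdempotentElem.mul_commutator_mul_commutator hp,
    IsIdempotentElem.mul_commutator_mul_commutator hp, IsIdempotentElem.compress_mul_compress hp,
    IsIdempotentElem.compress_mul_compress hp, mul_assoc p u v, huv, ← mul_assoc,
    sub_sub_sub_cancel_right]
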